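/- Let N ≥ 2 be an integer and define the N×N real matrix Q by Q_{k1} = (−1)^{k+1}/√N for k = 1,…,N, and Q_{kj} = √(2/N) · sin( (π(j−1)/N)(k − 1/2) ) for k = 1,…,N and j = 2,…,N. Then Q is orthogonal: Qᵀ Q = I_N. -/

import Mathlib

/-!
Column `0` of `Q` is, up to scaling, the sine mode of frequency `N`, since
`(-1)^k = sin (π (k + 1/2))`; so the columns of `Q` are the sampled sine modes
`sin (π a (k + 1/2) / N)` with frequencies `a = 1, …, N`. Product-to-sum turns the Gram sums
of these modes into sums `∑ₖ cos (π m (k + 1/2) / N)`, which telescope against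
`2 sin (π m / 2N)` to `sin (π m) = 0` unless `2N ∣ m`. The only surviving terms are `m = 0` and,
for the pair of frequency-`N` modes, `m = 2N`, which fix the normalisations `1/√N` and `√(2/N)`.
-/

open Real Finset

theorem neg_one_pow_eq_sin_pi_mul_add_half (k : ℕ) : (-1 : ℝ) ^ k = sin (π * (k + 1 / 2)) := by
  rw [show π * (k + 1 / 2) = k * π + π / 2 by ring, sin_add_pi_div_two, cos_nat_mul_pi]

theorem two_mul_sin_half_mul_sum_range_cos (θ : ℝ) (N : ℕ) :
    2 * sin (θ / 2) * ∑ k ∈ range N, cos (θ * (k + 1 / 2)) = sin (θ * N) := by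
  have hstep : ∀ k : ℕ, 2 * sin (θ / 2) * cos (θ * (k + 1 / 2)) =
      sin (θ * (k + 1 : ℕ)) - sin (θ * k) := by
    intro k
    rw [two_mul_sin_mul_cos, show θ / 2 - θ * (k + 1 / 2) = -(θ * k) by ring, sin_neg,
      show θ / 2 + θ * (k + 1 / 2) = θ * (k + 1 : ℕ) by push_cast; ring]
    ring
  rw [mul_sum, sum_congr rfl fun k _ => hstep k, sum_range_sub (fun k : ℕ => sin (θ * k))]
  simp

theorem sum_range_cos_pi_mul_div_mul_add_half {N : ℕ} {m : ℤ} (hm : ¬(2 * N : ℤ) ∣ m) :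
    ∑ k ∈ range N, cos (π * m / N * (k + 1 / 2)) = 0 := by
  rcases Nat.eq_zero_or_pos N with rfl | hN
  · simp
  have hN' : (N : ℝ) ≠ 0 := by positivity
  have hsin : 2 * sin (π * m / N / 2) ≠ 0 := by
    refine mul_ne_zero two_ne_zero ?_
    rw [Ne, sin_eq_zero_iff]
    rintro ⟨n, hn⟩
    refine hm ⟨n, ?_⟩
    have : (m : ℝ) = 2 * N * n := by
      field_simp at hn
      nlinarith [pi_pos]
    exact_mod_cast this
  have hsin_mul : sin (π * m / N * N) = 0 := by
    rw [div_mul_cancel₀ _ hN', mul_comm, sin_int_mul_pi]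
  have h := two_mul_sin_half_mul_sum_range_cos (π * m / N) N
  rw [hsin_mul] at h
  exact (mul_eq_zero.mp h).resolve_left hsin

theorem sum_range_sin_mul_sin {N a b : ℕ} (ha : 0 < a) (hb : 0 < b) (haN : a ≤ N)
    (hbN : b ≤ N) :
    ∑ k ∈ range N, sin (π * a / N * (k + 1 / 2)) * sin (π * b / N * (k + 1 / 2)) =
      if a = b then (if a = N then (N : ℝ) else N / 2) else 0 := by
  have hprod : ∀ k : ℕ, sin (π * a / N * (k + 1 / 2)) * sin (π * b / N * (k + 1 / 2)) =
      (cos (π * ((a - b : ℤ) : ℝ) / N * (k + 1 / 2)) -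
        cos (π * ((a + b : ℤ) : ℝ) / N * (k + 1 / 2))) / 2 := by
    intro k
    rw [eq_div_iff two_ne_zero, mul_comm, ← mul_assoc, two_mul_sin_mul_sin]
    push_cast
    ring_nf
  rw [sum_congr rfl fun k _ => hprod k, ← sum_div, sum_sub_distrib]
  split_ifs with hab hbN'
  · subst hab hbN'
    have hN : (a : ℝ) ≠ 0 := by positivity
    have hcos : ∀ k : ℕ, cos (π * ((a + a : ℤ) : ℝ) / a * (k + 1 / 2)) = -1 := by
      intro k
      rw [show π * ((a + a : ℤ) : ℝ) / a * (k + 1 / 2) = (2 * k + 1 : ℕ) * π by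
        push_cast; field_simp; ring, cos_nat_mul_pi, pow_succ, pow_mul]
      norm_num
    rw [sum_congr rfl fun k _ => hcos k]
    simp
  · subst hab
    have hsum : ∑ k ∈ range N, cos (π * ((a + a : ℤ) : ℝ) / N * (k + 1 / 2)) = 0 :=
      sum_range_cos_pi_mul_div_mul_add_half fun hdvd =>
        by have := Int.eq_zero_of_dvd_of_nonneg_of_lt (by omega) (by omega) hdvd; omega
    rw [hsum]
    simp
  · have hsum_sub : ∑ k ∈ range N, cos (π * ((a - b : ℤ) : ℝ) / N * (k + 1 / 2)) = 0 :=
      sum_range_cos_pi_mul_div_mul_add_half fun hdvd =>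
        by have := Int.eq_zero_of_abs_lt_dvd hdvd (by rw [abs_lt]; omega); omega
    have hsum_add : ∑ k ∈ range N, cos (π * ((a + b : ℤ) : ℝ) / N * (k + 1 / 2)) = 0 :=
      sum_range_cos_pi_mul_div_mul_add_half fun hdvd =>
        by have := Int.eq_zero_of_dvd_of_nonneg_of_lt (by omega) (by omega) hdvd; omega
    rw [hsum_sub, hsum_add]
    simp

theorem transpose_mul_self_eq_one_of_sine_columns {N : ℕ} {ι : Type*} [Fintype ι]
    [DecidableEq ι] (Q : Matrix (Fin N) ι ℝ) (a : ι → ℕ) (c : ι → ℝ) (ha : a.Injective)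
    (ha_pos : ∀ j, 0 < a j) (ha_le : ∀ j, a j ≤ N)
    (hc : ∀ j, c j ^ 2 * (if a j = N then (N : ℝ) else N / 2) = 1)
    (hQ : ∀ k j, Q k j = c j * sin (π * a j / N * (k + 1 / 2))) :
    Q.transpose * Q = 1 := by
  ext i j
  simp only [Matrix.mul_apply, Matrix.transpose_apply, Matrix.one_apply, hQ, mul_mul_mul_comm,
    ← mul_sum]
  rw [Fin.sum_univ_eq_sum_range
      (fun k => sin (π * a i / N * (k + 1 / 2)) * sin (π * a j / N * (k + 1 / 2))),
    sum_range_sin_mul_sin (ha_pos i) (ha_pos j) (ha_le i) (ha_le j)]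
  by_cases hij : i = j
  · subst hij
    rw [if_pos rfl, if_pos rfl, ← sq, hc]
  · rw [if_neg (ha.ne hij), if_neg hij, mul_zero]

theorem stmt_11 (N : ℕ)
    (Q : Matrix (Fin N) (Fin N) ℝ)
    (hQ : ∀ k j : Fin N, Q k j =
      if (j : ℕ) = 0 then (-1 : ℝ) ^ (k : ℕ) / Real.sqrt N
      else Real.sqrt (2 / N) * Real.sin (Real.pi * (j : ℝ) / N * ((k : ℝ) + 1/2))) :
    Q.transpose * Q = 1 := by
  refine transpose_mul_self_eq_one_of_sine_columns Q (fun j => if (j : ℕ) = 0 then N else j)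
    (fun j => if (j : ℕ) = 0 then 1 / √N else √(2 / N)) ?_ ?_ ?_ ?_ ?_
  · intro i j hij
    simp only at hij
    split_ifs at hij <;> omega
  · intro j
    split_ifs <;> omega
  · intro j
    split_ifs <;> omega
  · intro j
    have hN : (0 : ℝ) < N := by exact_mod_cast j.pos
    split_ifs
    · rw [div_pow, one_pow, sq_sqrt hN.le, one_div_mul_cancel hN.ne']
    · omega
    · omega
    · rw [sq_sqrt (by positivity)]
      field_simp
  · intro k j
    have hN : (N : ℝ) ≠ 0 := by exact_mod_cast k.pos.ne'
    rw [hQ]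
    split_ifs
    · rw [mul_div_cancel_right₀ _ hN, ← neg_one_pow_eq_sin_pi_mul_add_half, one_div_mul_eq_div]
    · rfl
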